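/- For α = 1 (so 𝒩_1(N) = (2 ∑_{j=1}^{⌊N/2⌋} 1/j)^{−1}) and every fixed t ∈ ℝ, the product P_{N,1}(t) = ∏_{j=1}^{⌊N/2⌋} cos²(2 𝒩_1(N) t / j) converges to 1 as N → ∞. -/

import Mathlib

/-- Kac normalization `𝒩_α(N) = (2 ∑_{j=1}^{⌊N/2⌋} j^{−α})⁻¹`. -/
noncomputable def kacNorm (α : ℝ) (N : ℕ) : ℝ :=
  (2 * ∑ j ∈ Finset.Icc 1 (N / 2), (j : ℝ) ^ (-α))⁻¹

/-- The relaxation product `P_{N,α}(t) = ∏_{j=1}^{⌊N/2⌋} cos²(2 𝒩_α(N) t j^{−α})`. -/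
noncomputable def relaxProd (α : ℝ) (N : ℕ) (t : ℝ) : ℝ :=
  ∏ j ∈ Finset.Icc 1 (N / 2), Real.cos (2 * kacNorm α N * t * (j : ℝ) ^ (-α)) ^ 2

/-!
Write `S_α(N) = ∑_{j=1}^{⌊N/2⌋} j^{−α}`, so that the arguments of the cosines are
`x_j = t j^{−α} / S_α(N)`. Since `cos² x = 1 − sin² x ≥ 1 − x²`, the Weierstrass product
inequality gives `1 − ∑ x_j² ≤ P_{N,α}(t) ≤ 1`, and for `α ≥ 0` we have `j^{−2α} ≤ j^{−α}`, whence
`∑ x_j² ≤ t² / S_α(N)`. For `0 ≤ α ≤ 1` the sum `S_α(N)` dominates the harmonic number `H_{⌊N/2⌋}`,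
which diverges, so `P_{N,α}(t) → 1`.
-/

open Filter Finset Real Topology

theorem Finset.one_sub_sum_le_prod_one_sub {ι : Type*} (s : Finset ι) {a : ι → ℝ}
    (h0 : ∀ i ∈ s, 0 ≤ a i) (h1 : ∀ i ∈ s, a i ≤ 1) : 1 - ∑ i ∈ s, a i ≤ ∏ i ∈ s, (1 - a i) := by
  induction s using Finset.cons_induction with
  | empty => simp
  | cons x s _ ih =>
    rw [sum_cons, prod_cons]
    have hx0 := h0 x (mem_cons_self x s)
    have hx1 := h1 x (mem_cons_self x s)
    have hs0 : 0 ≤ ∑ i ∈ s, a i := sum_nonneg fun i hi => h0 i (mem_cons_of_mem hi)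
    have ih := ih (fun i hi => h0 i (mem_cons_of_mem hi)) fun i hi => h1 i (mem_cons_of_mem hi)
    calc 1 - (a x + ∑ i ∈ s, a i)
        ≤ (1 - a x) * (1 - ∑ i ∈ s, a i) := by nlinarith
      _ ≤ (1 - a x) * ∏ i ∈ s, (1 - a i) := mul_le_mul_of_nonneg_left ih (by linarith)

theorem Real.one_sub_sum_sq_le_prod_cos_sq {ι : Type*} (s : Finset ι) (x : ι → ℝ) :
    1 - ∑ i ∈ s, x i ^ 2 ≤ ∏ i ∈ s, cos (x i) ^ 2 := by
  calc 1 - ∑ i ∈ s, x i ^ 2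
      ≤ 1 - ∑ i ∈ s, sin (x i) ^ 2 := sub_le_sub_left (sum_le_sum fun _ _ => sin_sq_le_sq) 1
    _ ≤ ∏ i ∈ s, (1 - sin (x i) ^ 2) :=
        s.one_sub_sum_le_prod_one_sub (fun _ _ => sq_nonneg _) fun _ _ => sin_sq_le_one _
    _ = ∏ i ∈ s, cos (x i) ^ 2 := by simp only [cos_sq']

noncomputable def kacSum (α : ℝ) (N : ℕ) : ℝ :=
  ∑ j ∈ Icc 1 (N / 2), (j : ℝ) ^ (-α)

theorem relaxProd_le_one (α : ℝ) (N : ℕ) (t : ℝ) : relaxProd α N t ≤ 1 :=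
  prod_le_one (fun _ _ => sq_nonneg _) fun _ _ => cos_sq_le_one _

theorem one_sub_sq_div_kacSum_le_relaxProd {α : ℝ} (hα : 0 ≤ α) (N : ℕ) (t : ℝ) :
    1 - t ^ 2 / kacSum α N ≤ relaxProd α N t := by
  set S := kacSum α N with hS
  have hterm : ∀ j ∈ Icc 1 (N / 2),
      (2 * kacNorm α N * t * (j : ℝ) ^ (-α)) ^ 2 ≤ (t / S) ^ 2 * (j : ℝ) ^ (-α) := by
    intro j hj
    have hj : (1 : ℝ) ≤ j := by exact_mod_cast (mem_Icc.mp hj).1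
    have hpow0 : 0 ≤ (j : ℝ) ^ (-α) := by positivity
    have hpow1 : (j : ℝ) ^ (-α) ≤ 1 := rpow_le_one_of_one_le_of_nonpos hj (by linarith)
    calc (2 * kacNorm α N * t * (j : ℝ) ^ (-α)) ^ 2
        = (t / S) ^ 2 * ((j : ℝ) ^ (-α) * (j : ℝ) ^ (-α)) := by
          simp only [kacNorm, S, kacSum]; ring
      _ ≤ (t / S) ^ 2 * (j : ℝ) ^ (-α) := by gcongr; exact mul_le_of_le_one_left hpow0 hpow1
  calc 1 - t ^ 2 / S
      = 1 - (t / S) ^ 2 * S := by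
        rcases eq_or_ne S 0 with hS0 | hS0
        · simp [hS0]
        · field_simp
    _ ≤ 1 - ∑ j ∈ Icc 1 (N / 2), (2 * kacNorm α N * t * (j : ℝ) ^ (-α)) ^ 2 := by
        rw [hS, kacSum, mul_sum]; exact sub_le_sub_left (sum_le_sum hterm) 1
    _ ≤ relaxProd α N t := one_sub_sum_sq_le_prod_cos_sq _ _

theorem tendsto_relaxProd_of_tendsto_kacSum {α : ℝ} (hα : 0 ≤ α)
    (hS : Tendsto (kacSum α) atTop atTop) (t : ℝ) :
    Tendsto (fun N => relaxProd α N t) atTop (𝓝 1) := by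
  have hlow : Tendsto (fun N => 1 - t ^ 2 / kacSum α N) atTop (𝓝 1) := by
    simpa using tendsto_const_nhds.sub (hS.const_div_atTop (t ^ 2))
  exact tendsto_of_tendsto_of_tendsto_of_le_of_le hlow tendsto_const_nhds
    (one_sub_sq_div_kacSum_le_relaxProd hα · t) (relaxProd_le_one α · t)

theorem tendsto_kacSum_atTop {α : ℝ} (hα : α ≤ 1) : Tendsto (kacSum α) atTop atTop := by
  have hharmonic : Tendsto (fun n : ℕ => ∑ j ∈ Icc 1 n, (j : ℝ)⁻¹) atTop atTop := by
    refine tendsto_sum_range_one_div_nat_succ_atTop.congr fun n => ?_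
    rw [← Ico_add_one_right_eq_Icc, sum_Ico_eq_sum_range]
    simp [add_comm]
  refine tendsto_atTop_mono (fun N => sum_le_sum fun j hj => ?_)
    (hharmonic.comp (Nat.tendsto_div_const_atTop two_ne_zero))
  have hj : (1 : ℝ) ≤ j := by exact_mod_cast (mem_Icc.mp hj).1
  simpa [rpow_neg_one] using rpow_le_rpow_of_exponent_le hj (neg_le_neg hα)

/-- for `α = 1` and every fixed `t`, `P_{N,1}(t) → 1` as `N → ∞`. -/
theorem stmt_4 (t : ℝ) :
    Filter.Tendsto (fun N : ℕ => relaxProd 1 N t) Filter.atTop (nhds 1) :=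
  tendsto_relaxProd_of_tendsto_kacSum zero_le_one (tendsto_kacSum_atTop le_rfl) t
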